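/- Let T ⊆ h be an additive subgroup on which B vanishes identically (B(s,t) = 0 for all s,t ∈ T). Let P be a locally finite h-module with action ρ, and let E : T → GL(P) be a group homomorphism (E_0 = id, E_{s+t} = E_s ∘ E_t) such that ρ(z)∘E_t − E_t∘ρ(z) = B(t,z)·E_t for all t ∈ T and z ∈ h. Then the only h-submodule of P contained in the subspace Σ_{t ∈ T} (id − E_t)(P) is the zero subspace. -/

import Mathlib

/-!
Because the `ρ z` commute and each acts locally finitely, every vector of `P` lies in a
finite-dimensional `ρ`-stable subspace; there the simultaneous generalised eigenspace
decomposition applies, so `P` is the direct sum of its generalised weight spaces `P_χ`, and the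
`ρ`-stable submodule `Q` is the sum of its intersections with them. The commutation relation says
that `E t` maps `P_χ` into `P_{χ + B t}`, and `t ↦ B t` is injective on `T` by nondegeneracy.
Summing `E (-u) ∘ π_{χ + B u}` over `u ∈ T` therefore gives a linear map that is the identity on
`P_χ` and kills every `p - E t p`, so `P_χ` meets the span of these vectors only in `0`.
-/

open Module End Polynomial Set

namespace Module.End

variable {K M : Type*} [Field K] [AddCommGroup M] [Module K M]

def IsLocallyFinite (f : End K M) : Prop :=
  ∀ m : M, ∃ g : K[X], g ≠ 0 ∧ aeval f g m = 0

theorem aeval_apply_eq_zero_of_dvd (f : End K M) {g g' : K[X]} (hdvd : g ∣ g') {m : M}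
    (hm : aeval f g m = 0) : aeval f g' m = 0 := by
  obtain ⟨r, rfl⟩ := hdvd
  rw [mul_comm, map_mul, Module.End.mul_apply, hm, map_zero]

theorem IsLocallyFinite.exists_monic_forall_aeval_eq_zero {f : End K M} (hf : f.IsLocallyFinite)
    (V : Submodule K M) [FiniteDimensional K V] :
    ∃ g : K[X], g.Monic ∧ ∀ v ∈ V, aeval f g v = 0 := by
  obtain ⟨S, rfl⟩ := (Submodule.fg_iff_finiteDimensional V).mpr ‹_›
  choose g hg0 hg using hf
  have hprod : ∏ m ∈ S, g m ≠ 0 := Finset.prod_ne_zero_iff.mpr fun m _ => hg0 m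
  refine ⟨_, monic_mul_leadingCoeff_inv hprod, fun v hv => ?_⟩
  refine Submodule.span_le (p := LinearMap.ker (aeval f _)) |>.mpr (fun m hm => ?_) hv
  exact aeval_apply_eq_zero_of_dvd f
    ((Finset.dvd_prod_of_mem g hm).mul_right _) (hg m)

theorem IsLocallyFinite.finiteDimensional_iSup_map_pow {f : End K M} (hf : f.IsLocallyFinite)
    (V : Submodule K M) [FiniteDimensional K V] :
    FiniteDimensional K ↥(⨆ n : ℕ, V.map (f ^ n)) := by
  obtain ⟨g, hg, hgV⟩ := hf.exists_monic_forall_aeval_eq_zero V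
  refine Submodule.finiteDimensional_of_le
    (S₂ := ⨆ k : Fin (g.natDegree + 1), V.map (f ^ (k : ℕ))) (iSup_le fun n => ?_)
  rintro _ ⟨v, hv, rfl⟩
  -- `g` kills `V`, so `X ^ n` may be replaced by its remainder modulo `g`
  have hred : (f ^ n) v = aeval f (X ^ n %ₘ g) v := by
    conv_lhs => rw [← aeval_X_pow (R := K) f, ← modByMonic_add_div (X ^ n) g]
    rw [map_add, LinearMap.add_apply, mul_comm, map_mul, Module.End.mul_apply, hgV v hv,
      map_zero, add_zero]
  rw [hred, aeval_eq_sum_range' (Nat.lt_succ_of_le (natDegree_modByMonic_le _ hg)),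
    LinearMap.sum_apply]
  refine Submodule.sum_mem _ fun k hk => Submodule.smul_mem _ _ ?_
  exact Submodule.mem_iSup_of_mem (⟨k, Finset.mem_range.mp hk⟩ : Fin _)
    (Submodule.mem_map_of_mem hv)

theorem mapsTo_iSup_map_pow_self (f : End K M) (V : Submodule K M) :
    MapsTo f ↑(⨆ n : ℕ, V.map (f ^ n)) ↑(⨆ n : ℕ, V.map (f ^ n)) := by
  intro x hx
  refine Submodule.iSup_induction _ (motive := fun x => f x ∈ ⨆ n : ℕ, V.map (f ^ n)) hx ?_
    (by simp) fun x y hx hy => by simpa using add_mem hx hy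
  rintro n _ ⟨v, hv, rfl⟩
  rw [← Module.End.mul_apply, ← pow_succ']
  exact Submodule.mem_iSup_of_mem (n + 1) (Submodule.mem_map_of_mem hv)

theorem mapsTo_iSup_map_pow_of_commute {f g : End K M} (hfg : Commute f g) {V : Submodule K M}
    (hV : MapsTo g V V) :
    MapsTo g ↑(⨆ n : ℕ, V.map (f ^ n)) ↑(⨆ n : ℕ, V.map (f ^ n)) := by
  intro x hx
  refine Submodule.iSup_induction _ (motive := fun x => g x ∈ ⨆ n : ℕ, V.map (f ^ n)) hx ?_
    (by simp) fun x y hx hy => by simpa using add_mem hx hy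
  rintro n _ ⟨v, hv, rfl⟩
  rw [← Module.End.mul_apply, ← (hfg.pow_left n).eq, Module.End.mul_apply]
  exact Submodule.mem_iSup_of_mem n (Submodule.mem_map_of_mem (hV hv))

theorem exists_finiteDimensional_le_forall_mapsTo (s : Finset (End K M))
    (hcomm : ∀ f ∈ s, ∀ g ∈ s, Commute f g) (hlf : ∀ f ∈ s, f.IsLocallyFinite)
    (V : Submodule K M) [FiniteDimensional K V] :
    ∃ W : Submodule K M, FiniteDimensional K W ∧ V ≤ W ∧ ∀ f ∈ s, MapsTo f W W := by
  classical
  induction s using Finset.induction_on with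
  | empty => exact ⟨V, ‹_›, le_rfl, by simp⟩
  | insert f s _ ih =>
    obtain ⟨W, hWfin, hVW, hW⟩ := ih
      (fun g hg g' hg' => hcomm g (by simp [hg]) g' (by simp [hg']))
      (fun g hg => hlf g (by simp [hg]))
    refine ⟨⨆ n : ℕ, W.map (f ^ n), (hlf f (by simp)).finiteDimensional_iSup_map_pow W,
      hVW.trans ?_, ?_⟩
    · simpa [Module.End.one_eq_id] using le_iSup (fun n : ℕ => W.map (f ^ n)) 0
    · simp only [Finset.forall_mem_insert]
      exact ⟨mapsTo_iSup_map_pow_self f W, fun g hg =>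
        mapsTo_iSup_map_pow_of_commute (hcomm f (by simp) g (by simp [hg])) (hW g hg)⟩

theorem iSup_inf_iInf_maxGenEigenspace_eq_self [IsAlgClosed K] {ι : Type*} (f : ι → End K M)
    (hcomm : ∀ i j, Commute (f i) (f j)) (W : Submodule K M) [FiniteDimensional K W]
    (hW : ∀ i, MapsTo (f i) W W) :
    ⨆ χ : ι → K, W ⊓ ⨅ i, (f i).maxGenEigenspace (χ i) = W := by
  have htop := iSup_iInf_maxGenEigenspace_eq_top_of_iSup_maxGenEigenspace_eq_top_of_commute
    (fun i => (f i).restrict (hW i)) (fun i j _ => LinearMap.restrict_commute (hcomm i j) _ _)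
    (fun i => iSup_maxGenEigenspace_eq_top _)
  simp_rw [Submodule.inf_iInf_maxGenEigenspace_of_forall_mapsTo _ _ hW, ← Submodule.map_iSup,
    htop, Submodule.map_top, Submodule.range_subtype]

theorem mapsTo_maxGenEigenspace_add_of_sub_eq_smul {R : Type*} [CommRing R] [Module R M]
    {f e : End R M} {c : R} (h : ∀ x, f (e x) - e (f x) = c • e x) (μ : R) :
    MapsTo e (f.maxGenEigenspace μ) (f.maxGenEigenspace (μ + c)) := by
  have hsemi : SemiconjBy e (f - μ • 1) (f - (μ + c) • 1) := by
    ext x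
    simp only [Module.End.mul_apply, LinearMap.sub_apply, LinearMap.smul_apply,
      Module.End.one_apply, map_sub, map_smul]
    linear_combination (norm := module) -h x
  intro x hx
  obtain ⟨k, hk⟩ := (mem_maxGenEigenspace _ _ _).mp hx
  exact (mem_maxGenEigenspace _ _ _).mpr ⟨k, by
    rw [← Module.End.mul_apply, ← (hsemi.pow_right k).eq, Module.End.mul_apply, hk, map_zero]⟩

end Module.End

section Weights

variable {K L M : Type*} [Field K] [AddCommGroup L] [Module K L] [FiniteDimensional K L]
  [AddCommGroup M] [Module K M] (ρ : L →ₗ[K] End K M)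

theorem exists_finiteDimensional_mem_forall_mapsTo (hcomm : ∀ y z, Commute (ρ y) (ρ z))
    (hlf : ∀ y, (ρ y).IsLocallyFinite) (m : M) :
    ∃ W : Submodule K M, FiniteDimensional K W ∧ m ∈ W ∧ ∀ z, MapsTo (ρ z) W W := by
  classical
  let b := Module.finBasis K L
  obtain ⟨W, hWfin, hmW, hW⟩ := exists_finiteDimensional_le_forall_mapsTo
    (Finset.univ.image (ρ ∘ b)) (by simp [hcomm]) (by simp [hlf]) (K ∙ m)
  refine ⟨W, hWfin, hmW (Submodule.mem_span_singleton_self m), fun z w hw => ?_⟩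
  rw [← b.sum_repr z, map_sum, LinearMap.sum_apply]
  exact Submodule.sum_mem _ fun i _ => by
    simpa using W.smul_mem (b.repr z i) (hW (ρ (b i)) (by simp) hw)

theorem le_iSup_inf_iInf_maxGenEigenspace [IsAlgClosed K] (hcomm : ∀ y z, Commute (ρ y) (ρ z))
    (hlf : ∀ y, (ρ y).IsLocallyFinite) (Q : Submodule K M) (hQ : ∀ z, MapsTo (ρ z) Q Q) :
    Q ≤ ⨆ χ : L → K, Q ⊓ ⨅ z, (ρ z).maxGenEigenspace (χ z) := by
  intro q hq
  obtain ⟨W, hWfin, hqW, hW⟩ := exists_finiteDimensional_mem_forall_mapsTo ρ hcomm hlf q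
  have hWQ : ∀ z, MapsTo (ρ z) ↑(W ⊓ Q) ↑(W ⊓ Q) := fun z x hx => ⟨hW z hx.1, hQ z hx.2⟩
  have hqWQ := (iSup_inf_iInf_maxGenEigenspace_eq_self ρ hcomm (W ⊓ Q) hWQ).ge ⟨hqW, hq⟩
  have hmono : ⨆ χ : L → K, W ⊓ Q ⊓ ⨅ z, (ρ z).maxGenEigenspace (χ z) ≤
      ⨆ χ : L → K, Q ⊓ ⨅ z, (ρ z).maxGenEigenspace (χ z) :=
    iSup_mono fun χ => inf_le_inf_right _ inf_le_right
  exact hmono hqWQ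

theorem isInternal_iInf_maxGenEigenspace [IsAlgClosed K] [DecidableEq (L → K)]
    (hcomm : ∀ y z, Commute (ρ y) (ρ z)) (hlf : ∀ y, (ρ y).IsLocallyFinite) :
    DirectSum.IsInternal fun χ : L → K => ⨅ z, (ρ z).maxGenEigenspace (χ z) := by
  refine DirectSum.isInternal_submodule_of_iSupIndep_of_iSup_eq_top
    (independent_iInf_maxGenEigenspace_of_forall_mapsTo ρ
      fun y z μ => mapsTo_maxGenEigenspace_of_comm (hcomm z y) μ) (eq_top_iff.mpr ?_)
  simpa using le_iSup_inf_iInf_maxGenEigenspace ρ hcomm hlf ⊤ fun z => mapsTo_univ _ _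

end Weights

namespace DirectSum.IsInternal

variable {K M ι G : Type*} [Field K] [AddCommGroup M] [Module K M] [AddCommGroup ι]
  [AddCommGroup G] [DecidableEq ι] {A : ι → Submodule K M}

open Classical in
/-- On `A (μ + β u)` this is `E (-u)`, and it vanishes on the `A i` with `i ∉ μ + range β`. -/
noncomputable def collapseOrbit (hA : IsInternal A) (β : G →+ ι) (E : G → M ≃ₗ[K] M) (μ : ι) :
    M →ₗ[K] M :=
  toModule K ι M (fun i => if i - μ ∈ range β then
      (E (-Function.invFun β (i - μ))).toLinearMap ∘ₗ (A i).subtype else 0) ∘ₗ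
    (LinearEquiv.ofBijective (coeLinearMap A) hA).symm.toLinearMap

variable (β : G →+ ι) (E : G → M ≃ₗ[K] M) (μ : ι)

open Classical in
theorem collapseOrbit_apply_of_mem (hA : IsInternal A) {i : ι} {x : M} (hx : x ∈ A i) :
    hA.collapseOrbit β E μ x =
      if i - μ ∈ range β then E (-Function.invFun β (i - μ)) x else 0 := by
  have hsymm : (LinearEquiv.ofBijective (coeLinearMap A) hA).symm x =
      lof K ι (fun i => A i) i ⟨x, hx⟩ := by
    rw [LinearEquiv.symm_apply_eq]
    exact (coeLinearMap_lof A i ⟨x, hx⟩).symm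
  simp only [collapseOrbit, LinearMap.comp_apply, LinearEquiv.coe_coe, hsymm, toModule_lof]
  split_ifs <;> rfl

theorem collapseOrbit_apply_of_mem_self (hA : IsInternal A) (hβ : Function.Injective β)
    (hE0 : E 0 = LinearEquiv.refl K M) {x : M} (hx : x ∈ A μ) :
    hA.collapseOrbit β E μ x = x := by
  rw [hA.collapseOrbit_apply_of_mem β E μ hx, sub_self, if_pos ⟨0, map_zero β⟩, ← map_zero β,
    Function.leftInverse_invFun hβ, neg_zero, hE0, LinearEquiv.refl_apply]

theorem collapseOrbit_apply_shift (hA : IsInternal A) (hβ : Function.Injective β)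
    (hEadd : ∀ s t x, E (s + t) x = E s (E t x))
    (hEA : ∀ t i, ∀ x ∈ A i, E t x ∈ A (i + β t)) (t : G) (x : M) :
    hA.collapseOrbit β E μ (E t x) = hA.collapseOrbit β E μ x := by
  have hx : x ∈ ⨆ i, A i := hA.submodule_iSup_eq_top ▸ Submodule.mem_top
  refine Submodule.iSup_induction _ (motive := fun x =>
    hA.collapseOrbit β E μ (E t x) = hA.collapseOrbit β E μ x) hx ?_ (by simp)
    fun x y hx hy => by simp only [map_add, hx, hy]
  intro i x hx
  rw [hA.collapseOrbit_apply_of_mem β E μ (hEA t i x hx),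
    hA.collapseOrbit_apply_of_mem β E μ hx, add_sub_right_comm]
  by_cases hi : i - μ ∈ range β
  · obtain ⟨u, hu⟩ := hi
    rw [← hu, ← map_add, if_pos (mem_range_self _), if_pos (mem_range_self _),
      Function.leftInverse_invFun hβ, Function.leftInverse_invFun hβ, ← hEadd, neg_add,
      neg_add_cancel_right]
  · have hit : i - μ + β t ∉ range β := fun ⟨v, hv⟩ =>
      hi ⟨v - t, by rw [map_sub, hv, add_sub_cancel_right]⟩
    rw [if_neg hi, if_neg hit]

theorem inf_span_sub_apply_eq_bot (hA : IsInternal A) (hβ : Function.Injective β)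
    (hE0 : E 0 = LinearEquiv.refl K M) (hEadd : ∀ s t x, E (s + t) x = E s (E t x))
    (hEA : ∀ t i, ∀ x ∈ A i, E t x ∈ A (i + β t)) :
    A μ ⊓ Submodule.span K {v | ∃ (t : G) (p : M), v = p - E t p} = ⊥ := by
  refine eq_bot_iff.mpr fun x ⟨hxA, hxS⟩ => ?_
  have hker : Submodule.span K {v | ∃ (t : G) (p : M), v = p - E t p} ≤
      LinearMap.ker (hA.collapseOrbit β E μ) := by
    refine Submodule.span_le.mpr ?_
    rintro _ ⟨t, p, rfl⟩
    simp [hA.collapseOrbit_apply_shift β E μ hβ hEadd hEA]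
  rw [Submodule.mem_bot, ← hA.collapseOrbit_apply_of_mem_self β E μ hβ hE0 hxA]
  exact hker hxS

end DirectSum.IsInternal

theorem submodule_in_coinvariants_kernel_is_zero_general
    (h : Type*) [AddCommGroup h] [Module ℂ h] [FiniteDimensional ℂ h]
    (B : h →ₗ[ℂ] h →ₗ[ℂ] ℂ)
    (hBnd : ∀ x : h, (∀ y : h, B x y = 0) → x = 0)
    (T : AddSubgroup h)
    (P : Type*) [AddCommGroup P] [Module ℂ P]
    (ρ : h →ₗ[ℂ] Module.End ℂ P)
    (hcomm : ∀ y z : h, Commute (ρ y) (ρ z))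
    (hlf : ∀ (y : h) (p : P), ∃ f : Polynomial ℂ, f ≠ 0 ∧ (Polynomial.aeval (ρ y) f) p = 0)
    (E : T → (P ≃ₗ[ℂ] P))
    (hE0 : E 0 = LinearEquiv.refl ℂ P)
    (hEadd : ∀ (s t : T) (p : P), E (s + t) p = E s (E t p))
    (hEcom : ∀ (t : T) (z : h) (p : P), ρ z (E t p) - E t (ρ z p) = B (t : h) z • E t p)
    (Q : Submodule ℂ P)
    (hQmod : ∀ z : h, ∀ q ∈ Q, ρ z q ∈ Q)
    (hQle : Q ≤ Submodule.span ℂ {v : P | ∃ (t : T) (p : P), v = p - E t p}) :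
    Q = ⊥ := by
  classical
  let β : T →+ (h → ℂ) := AddMonoidHom.mk' (fun t => ⇑(B t)) fun s t => by
    rw [AddSubgroup.coe_add, map_add]; rfl
  have hβ : Function.Injective β := fun s t hst => Subtype.ext <| sub_eq_zero.mp <|
    hBnd _ fun y => by rw [map_sub, LinearMap.sub_apply, sub_eq_zero]; exact congrFun hst y
  have hshift : ∀ t χ, ∀ x ∈ ⨅ z, (ρ z).maxGenEigenspace (χ z),
      E t x ∈ ⨅ z, (ρ z).maxGenEigenspace ((χ + β t) z) := fun t χ x hx =>
    Submodule.mem_iInf _ |>.mpr fun z => mapsTo_maxGenEigenspace_add_of_sub_eq_smul (hEcom t z)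
      (χ z) (Submodule.mem_iInf _ |>.mp hx z)
  refine eq_bot_iff.mpr <| (le_iSup_inf_iInf_maxGenEigenspace ρ hcomm hlf Q
    fun z _ hq => hQmod z _ hq).trans <| iSup_le fun χ => ?_
  rw [← (isInternal_iInf_maxGenEigenspace ρ hcomm hlf).inf_span_sub_apply_eq_bot β E χ hβ hE0
    hEadd hshift]
  exact le_inf inf_le_right (inf_le_left.trans hQle)

/-- Let `T ⊆ h` be a subgroup on which `B` vanishes, `P` a locally finite `h`-module, and
`E : T → GL(P)` a group homomorphism with `ρ(z)∘E_t − E_t∘ρ(z) = B(t,z)·E_t`. Then the only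
`h`-submodule of `P` contained in `Σ_{t ∈ T} (id − E_t)(P)` is zero. -/
theorem submodule_in_coinvariants_kernel_is_zero
    (h : Type*) [AddCommGroup h] [Module ℂ h] [FiniteDimensional ℂ h]
    (B : h →ₗ[ℂ] h →ₗ[ℂ] ℂ)
    (hBsymm : ∀ x y : h, B x y = B y x)
    (hBnd : ∀ x : h, (∀ y : h, B x y = 0) → x = 0)
    (T : AddSubgroup h)
    (hT : ∀ s ∈ T, ∀ t ∈ T, B s t = 0)
    (P : Type*) [AddCommGroup P] [Module ℂ P]
    (ρ : h →ₗ[ℂ] Module.End ℂ P)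
    (hcomm : ∀ y z : h, Commute (ρ y) (ρ z))
    (hlf : ∀ (y : h) (p : P), ∃ f : Polynomial ℂ, f ≠ 0 ∧ (Polynomial.aeval (ρ y) f) p = 0)
    (E : T → (P ≃ₗ[ℂ] P))
    (hE0 : E 0 = LinearEquiv.refl ℂ P)
    (hEadd : ∀ (s t : T) (p : P), E (s + t) p = E s (E t p))
    (hEcom : ∀ (t : T) (z : h) (p : P), ρ z (E t p) - E t (ρ z p) = B (t : h) z • E t p)
    (Q : Submodule ℂ P)
    (hQmod : ∀ z : h, ∀ q ∈ Q, ρ z q ∈ Q)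
    (hQle : Q ≤ Submodule.span ℂ {v : P | ∃ (t : T) (p : P), v = p - E t p}) :
    Q = ⊥ :=
  submodule_in_coinvariants_kernel_is_zero_general h B hBnd T P ρ hcomm hlf E hE0 hEadd hEcom Q
    hQmod hQle
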